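/- Let G = ℤ/4 × ℤ/2 × ℤ/2, a group of order 16, let H = {0} × ℤ/2 × ℤ/2 ⊆ G, and let M be the augmentation ideal of the group ring (ℤ/16)[G], so that H¹(G, M) ≅ ℤ/16. Under this isomorphism: (a) the kernel of the restriction map H¹(G, M) → H¹(H, M) is contained in the subgroup 4·(ℤ/16) of order 4; (b) the intersection of the kernels of the restriction maps H¹(G, M) → H¹(C, M) over all cyclic subgroups C of H equals the subgroup 2·(ℤ/16) of order 8. In particular this intersection strictly contains the sum of the kernel in (a) and the kernel of restriction to the cyclic subgroup ℤ/4 × {0} × {0}. -/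

import Mathlib

open CategoryTheory Finsupp

/-- The augmentation map `k[G] → k` as a morphism of representations. -/
noncomputable def augmentationHom (k : Type) (G : Type) [CommRing k] [Group G] :
    Rep.leftRegular k G ⟶ Rep.trivial k G k :=
  Rep.ofHom
    { toLinearMap := Finsupp.linearCombination k (fun _ : G => (1 : k)) ∘ₗ
        (MonoidAlgebra.coeffLinearEquiv k).toLinearMap
      isIntertwining' := fun g => by
        ext x
        simp [Representation.ofMulAction_single] }

/-- The augmentation ideal of `k[G]`, as a `G`-representation. -/
noncomputable def augmentationIdeal (k : Type) (G : Type) [CommRing k] [Group G] : Rep k G :=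
  Limits.kernel (augmentationHom k G)

/-- The group `G = ℤ/4 × ℤ/2 × ℤ/2` (written multiplicatively). -/
abbrev G₁₆ : Type := Multiplicative (ZMod 4 × ZMod 2 × ZMod 2)

/-- The subgroup `H = {0} × ℤ/2 × ℤ/2` of `G`. -/
def Hsub : Subgroup G₁₆ :=
  (AddMonoidHom.toMultiplicative (AddMonoidHom.fst (ZMod 4) (ZMod 2 × ZMod 2))).ker

/-- The cyclic subgroup `ℤ/4 × {0} × {0}` of `G`. -/
def Dsub : Subgroup G₁₆ :=
  (AddMonoidHom.toMultiplicative (AddMonoidHom.inl (ZMod 4) (ZMod 2 × ZMod 2))).range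

/-- The augmentation ideal `M` of `(ℤ/16)[G]` as a representation of `G`. -/
noncomputable def M₁₆ : Rep (ZMod 16) G₁₆ := augmentationIdeal (ZMod 16) G₁₆

/-- A 1-cocycle restricts to a coboundary on a subset `S ⊆ G`. -/
noncomputable def IsCoboundaryOn (S : Set G₁₆) (f : groupCohomology.cocycles₁ M₁₆) : Prop :=
  ∃ m : M₁₆, ∀ g ∈ S, f g = M₁₆.ρ g m - m

/-- The kernel of the restriction map `H¹(G, M) → H¹(S, M)`, as a subset of `H¹(G, M)`:
classes represented by a cocycle whose restriction to `S` is a coboundary. -/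
noncomputable def resKer (S : Set G₁₆) : Set (groupCohomology.H1 M₁₆) :=
  {c | ∃ f : groupCohomology.cocycles₁ M₁₆,
    groupCohomology.H1π M₁₆ f = c ∧ IsCoboundaryOn S f}

/-- The intersection of the kernels of restriction to all cyclic subgroups of `H`. -/
noncomputable def interKerCyc : Set (groupCohomology.H1 M₁₆) :=
  {c | ∀ C : Subgroup G₁₆, C ≤ Hsub → IsCyclic C → c ∈ resKer (C : Set G₁₆)}

/-!
For a finite group `G` and a 1-cocycle `f` with values in the augmentation ideal `M ⊆ k[G]`, the
element `α = -∑ₓ (f x)ₓ x` of `k[G]` (where `(f x)ₓ` is the coefficient of `x` in `f x`) satisfies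
`g α - α = f g`, so `f` becomes a coboundary in `k[G]`, and it is already one in `M` when the
augmentation `ε(α)` vanishes. If `f` agrees on a subgroup `K` with the coboundary of some `m ∈ M`,
then `α - m` is `K`-invariant, so `ε(α) = ε(α - m)` is a multiple of `|K|`; hence `n • [f] = 0` as
soon as `n |K| = 0` in `k`. For `k = ℤ/16` this shows that the kernels of restriction to `H` and to
`ℤ/4 × 0 × 0` are killed by `4`, and the intersection over the cyclic subgroups of `H` by `8`.
Conversely, every element of `H` has order at most `2`, and on a subgroup `{1, h}` with `h² = 1`
the cocycle `2 • f` is the coboundary of `-f h`, so `2 • H¹(G, M)` lies in the intersection.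
-/

open Limits groupCohomology

open Finset in
theorem Subgroup.exists_sum_eq_card_nsmul {G M : Type*} [Group G] [Fintype G] [AddCommMonoid M]
    (K : Subgroup G) {β : G → M} (hβ : ∀ c ∈ K, ∀ x, β (c * x) = β x) :
    ∃ t, ∑ x, β x = Nat.card K • t := by
  classical
  refine ⟨∑ q : G ⧸ K, β q.out⁻¹, ?_⟩
  -- `y ↦ β y⁻¹` is constant on the left cosets `y K`, the fibres of `G → G ⧸ K`.
  calc ∑ x, β x = ∑ y, β y⁻¹ := (Fintype.sum_equiv (Equiv.inv G) _ _ fun _ => rfl).symm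
    _ = ∑ q : G ⧸ K, ∑ y ∈ univ.filter (fun y : G => (y : G ⧸ K) = q), β y⁻¹ :=
      (sum_fiberwise _ _ _).symm
    _ = ∑ q : G ⧸ K, Nat.card K • β q.out⁻¹ := by
      refine sum_congr rfl fun q _ => ?_
      rw [sum_eq_card_nsmul (b := β q.out⁻¹)]
      · congr 1
        simpa using QuotientGroup.card_preimage_mk K {q}
      · intro y hy
        have hy : q.out⁻¹ * y ∈ K := by
          rw [← QuotientGroup.eq, QuotientGroup.out_eq']
          exact (mem_filter.1 hy).2.symm
        simpa [mul_assoc] using hβ _ (inv_mem hy) q.out⁻¹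
    _ = Nat.card K • ∑ q : G ⧸ K, β q.out⁻¹ := smul_sum.symm

namespace groupCohomology

variable {k G : Type} [CommRing k] [Group G] {A : Rep k G}

@[simp] lemma cocycles₁_add_apply (f f' : cocycles₁ A) (g : G) : (f + f') g = f g + f' g := rfl

@[simp] lemma cocycles₁_smul_apply (r : k) (f : cocycles₁ A) (g : G) : (r • f) g = r • f g := rfl

@[simp] lemma cocycles₁_nsmul_apply (n : ℕ) (f : cocycles₁ A) (g : G) : (n • f) g = n • f g := rfl

/-- The elements on which a 1-cocycle agrees with the coboundary of `m` form a subgroup. -/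
lemma cocycles₁_apply_eq_of_mem_closure (f : cocycles₁ A) (m : A) {S : Set G}
    (hS : ∀ g ∈ S, f g = A.ρ g m - m) {g : G} (hg : g ∈ Subgroup.closure S) :
    f g = A.ρ g m - m := by
  induction hg using Subgroup.closure_induction with
  | mem g hg => exact hS g hg
  | one => simp
  | mul x y _ _ hx hy =>
    rw [(mem_cocycles₁_iff f).1 f.2 x y, hx, hy, map_mul, Module.End.mul_apply, map_sub]
    abel
  | inv x _ hx =>
    rw [← A.ρ.inv_self_apply x (f x⁻¹), cocycles₁_map_inv, hx, map_neg, map_sub,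
      Representation.inv_self_apply, neg_sub]

lemma two_nsmul_cocycles₁_apply_of_mem_zpowers (f : cocycles₁ A) {h : G} (hh : h * h = 1)
    {g : G} (hg : g ∈ Subgroup.zpowers h) : 2 • f g = A.ρ g (-f h) - -f h := by
  rw [Subgroup.zpowers_eq_closure] at hg
  refine cocycles₁_apply_eq_of_mem_closure (2 • f) (-f h) (fun g' hg' => ?_) hg
  obtain rfl := Set.mem_singleton_iff.1 hg'
  have hρ : A.ρ g' (f g') = -f g' := by
    rw [← add_eq_zero_iff_eq_neg, ← (mem_cocycles₁_iff f).1 f.2, hh, cocycles₁_map_one]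
  rw [cocycles₁_nsmul_apply, map_neg, hρ, two_nsmul, neg_neg, sub_neg_eq_add]

end groupCohomology

namespace augmentationIdeal
variable {k G : Type} [CommRing k] [Group G]

noncomputable def ι : augmentationIdeal k G ⟶ Rep.leftRegular k G :=
  kernel.ι (augmentationHom k G)

lemma exists_ι_eq (x : Rep.leftRegular k G) (hx : (augmentationHom k G).hom x = 0) :
    ∃ m, ι.hom m = x := by
  have hS : (ShortComplex.mk (kernel.ι (augmentationHom k G)) _ (kernel.condition _)).Exact :=
    ShortComplex.exact_of_f_is_kernel _ (kernelIsKernel _)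
  exact (ShortComplex.moduleCat_exact_iff _).1 (hS.map (forget₂ (Rep k G) (ModuleCat k))) x hx

lemma ι_injective : Function.Injective (ι (k := k) (G := G)).hom :=
  (Rep.mono_iff_injective _).1 (inferInstanceAs (Mono (kernel.ι _)))

@[simp] lemma augmentationHom_ι (m : augmentationIdeal k G) :
    (augmentationHom k G).hom (ι.hom m) = 0 :=
  congr($(kernel.condition (augmentationHom k G)).hom m)

variable [Fintype G]

lemma augmentationHom_hom_apply (x : Rep.leftRegular k G) :
    (augmentationHom k G).hom x = ∑ g, x.coeff g := by
  simp [augmentationHom, Finsupp.linearCombination_apply, Finsupp.sum_fintype]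

noncomputable def cocyclePrimitive :
    cocycles₁ (augmentationIdeal k G) →ₗ[k] Rep.leftRegular k G where
  toFun f := MonoidAlgebra.ofCoeff (Finsupp.equivFunOnFinite.symm fun x => -(ι.hom (f x)).coeff x)
  map_add' f f' := by
    apply MonoidAlgebra.coeff_injective
    ext x
    simp only [cocycles₁_add_apply, map_add, MonoidAlgebra.coeff_add, Finsupp.coe_add,
      Pi.add_apply, Finsupp.equivFunOnFinite_symm_apply_apply, Finsupp.coe_equivFunOnFinite_symm]
    ring
  map_smul' r f := by
    apply MonoidAlgebra.coeff_injective
    ext x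
    simp

lemma coeff_cocyclePrimitive (f : cocycles₁ (augmentationIdeal k G)) (x : G) :
    (cocyclePrimitive f).coeff x = -(ι.hom (f x)).coeff x := rfl

lemma ρ_cocyclePrimitive_sub (f : cocycles₁ (augmentationIdeal k G)) (g : G) :
    (Rep.leftRegular k G).ρ g (cocyclePrimitive f) - cocyclePrimitive f = ι.hom (f g) := by
  apply MonoidAlgebra.coeff_injective
  ext x
  have hf := congr((ι.hom $((mem_cocycles₁_iff (f : G → _)).1 f.2 g (g⁻¹ * x))).coeff x)
  rw [mul_inv_cancel_left, map_add, Rep.hom_comm_apply] at hf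
  simp only [MonoidAlgebra.coeff_add, MonoidAlgebra.coeff_sub, Finsupp.add_apply, Finsupp.sub_apply,
    Representation.coeff_ofMulAction, smul_eq_mul] at hf ⊢
  rw [coeff_cocyclePrimitive, coeff_cocyclePrimitive]
  linear_combination hf

lemma mem_coboundaries₁_of_augmentationHom_cocyclePrimitive_eq_zero
    (f : cocycles₁ (augmentationIdeal k G))
    (hf : (augmentationHom k G).hom (cocyclePrimitive f) = 0) :
    ⇑f ∈ coboundaries₁ (augmentationIdeal k G) := by
  obtain ⟨m, hm⟩ := exists_ι_eq _ hf
  refine ⟨m, funext fun g => ι_injective ?_⟩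
  rw [d₀₁_hom_apply, map_sub, Rep.hom_comm_apply, hm, ρ_cocyclePrimitive_sub]

lemma exists_augmentationHom_cocyclePrimitive_eq_card_mul
    (f : cocycles₁ (augmentationIdeal k G)) (K : Subgroup G) (m : augmentationIdeal k G)
    (hm : ∀ g ∈ K, f g = (augmentationIdeal k G).ρ g m - m) :
    ∃ t, (augmentationHom k G).hom (cocyclePrimitive f) = Nat.card K * t := by
  set β := cocyclePrimitive f - ι.hom m
  have hβ : ∀ g ∈ K, (Rep.leftRegular k G).ρ g β = β := fun g hg => by
    rw [← sub_eq_zero, map_sub, sub_sub_sub_comm, ρ_cocyclePrimitive_sub, ← Rep.hom_comm_apply,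
      ← map_sub, hm g hg, sub_self]
  obtain ⟨t, ht⟩ := K.exists_sum_eq_card_nsmul (β := fun x => β.coeff x) fun c hc x => by
    simpa using congr($(hβ c hc).coeff (c * x)).symm
  refine ⟨t, ?_⟩
  rw [← nsmul_eq_mul, ← ht, ← augmentationHom_hom_apply, map_sub, augmentationHom_ι, sub_zero]

theorem nsmul_H1π_eq_zero_of_eq_on_subgroup
    (f : cocycles₁ (augmentationIdeal k G)) (K : Subgroup G) (m : augmentationIdeal k G)
    (hm : ∀ g ∈ K, f g = (augmentationIdeal k G).ρ g m - m) {n : ℕ}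
    (hn : (n * Nat.card K : k) = 0) : n • H1π _ f = 0 := by
  obtain ⟨t, ht⟩ := exists_augmentationHom_cocyclePrimitive_eq_card_mul f K m hm
  rw [← map_nsmul, H1π_eq_zero_iff]
  apply mem_coboundaries₁_of_augmentationHom_cocyclePrimitive_eq_zero
  rw [map_nsmul, map_nsmul, ht, nsmul_eq_mul, ← mul_assoc, hn, zero_mul]

end augmentationIdeal

lemma card_Hsub : Nat.card Hsub = 4 := by
  have hindex : Hsub.index = 4 := by
    rw [Hsub, Subgroup.index_ker,
      MonoidHom.range_eq_top.2 fun a => ⟨Multiplicative.ofAdd (a.toAdd, 0), rfl⟩]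
    simp
  have h : Nat.card Hsub * 4 = 16 := by simpa [hindex] using Hsub.card_mul_index
  omega

lemma card_Dsub : Nat.card Dsub = 4 := by
  rw [Dsub, ← Nat.card_congr (MonoidHom.ofInjective _).toEquiv]
  · simp
  · intro a b h
    exact congrArg (fun x => (Multiplicative.toAdd x).1) h

lemma mul_self_eq_one_of_mem_Hsub {h : G₁₆} (hh : h ∈ Hsub) : h * h = 1 := by
  have key : ∀ h : G₁₆, h.toAdd.1 = 0 → h * h = 1 := by decide
  exact key h hh

lemma nsmul_eq_zero_of_mem_resKer {K : Subgroup G₁₆} {c : H1 M₁₆}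
    (hc : c ∈ resKer (K : Set G₁₆)) {n : ℕ} (hn : (n * Nat.card K : ZMod 16) = 0) :
    n • c = 0 := by
  obtain ⟨f, rfl, m, hm⟩ := hc
  exact augmentationIdeal.nsmul_H1π_eq_zero_of_eq_on_subgroup f K m hm hn

lemma four_nsmul_eq_zero_of_mem_resKer_Hsub {c : H1 M₁₆} (hc : c ∈ resKer (Hsub : Set G₁₆)) :
    4 • c = 0 :=
  nsmul_eq_zero_of_mem_resKer hc (by rw [card_Hsub]; decide)

lemma four_nsmul_eq_zero_of_mem_resKer_Dsub {c : H1 M₁₆} (hc : c ∈ resKer (Dsub : Set G₁₆)) :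
    4 • c = 0 :=
  nsmul_eq_zero_of_mem_resKer hc (by rw [card_Dsub]; decide)

lemma four_nsmul_add_eq_zero {a b : H1 M₁₆} (ha : a ∈ resKer (Hsub : Set G₁₆))
    (hb : b ∈ resKer (Dsub : Set G₁₆)) : 4 • (a + b) = 0 := by
  rw [nsmul_add, four_nsmul_eq_zero_of_mem_resKer_Hsub ha, four_nsmul_eq_zero_of_mem_resKer_Dsub hb,
    add_zero]

lemma eight_nsmul_eq_zero_of_mem_interKerCyc {c : H1 M₁₆} (hc : c ∈ interKerCyc) : 8 • c = 0 := by
  let h : G₁₆ := Multiplicative.ofAdd (0, 1, 0)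
  have horder : orderOf h = 2 := orderOf_eq_prime (by decide) (by decide)
  refine nsmul_eq_zero_of_mem_resKer
    (hc (Subgroup.zpowers h) (Subgroup.zpowers_le.2 rfl) inferInstance) ?_
  rw [Nat.card_zpowers, horder]
  decide

lemma two_nsmul_mem_interKerCyc (d : H1 M₁₆) : 2 • d ∈ interKerCyc := by
  intro C hC hcyc
  obtain ⟨h, rfl⟩ := C.isCyclic_iff_exists_zpowers_eq_top.1 hcyc
  have hh := mul_self_eq_one_of_mem_Hsub (hC (Subgroup.mem_zpowers h))
  induction d using H1_induction_on with
  | h f => exact ⟨2 • f, map_nsmul _ _ _, -f h,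
      fun g hg => two_nsmul_cocycles₁_apply_of_mem_zpowers f hh hg⟩

lemma exists_eq_four_mul_of_four_nsmul_eq_zero : ∀ x : ZMod 16, 4 • x = 0 → ∃ y, x = 4 * y := by
  decide

lemma exists_eq_two_mul_of_eight_nsmul_eq_zero : ∀ x : ZMod 16, 8 • x = 0 → ∃ y, x = 2 * y := by
  decide

lemma mem_interKerCyc_of_four_nsmul_eq_zero (φ : H1 M₁₆ ≃+ ZMod 16) {c : H1 M₁₆}
    (hc : 4 • c = 0) : c ∈ interKerCyc := by
  obtain ⟨y, hy⟩ :=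
    exists_eq_four_mul_of_four_nsmul_eq_zero (φ c) (by rw [← map_nsmul, hc, map_zero])
  have hc : c = 2 • φ.symm (2 * y) :=
    φ.injective (by rw [map_nsmul, φ.apply_symm_apply, hy]; ring)
  exact hc ▸ two_nsmul_mem_interKerCyc _

/-- Let `G = ℤ/4 × ℤ/2 × ℤ/2`, `H = {0} × ℤ/2 × ℤ/2` and `M` the augmentation ideal of
`(ℤ/16)[G]`, so that `H¹(G,M) ≅ ℤ/16`.  Under any such isomorphism:
(a) the kernel of restriction `H¹(G,M) → H¹(H,M)` lands in `4·(ℤ/16)`;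
(b) the intersection of the kernels of restriction to all cyclic subgroups of `H`
is exactly `2·(ℤ/16)`; in particular this intersection strictly contains the sum of the
kernel in (a) and the kernel of restriction to `ℤ/4 × {0} × {0}`. -/
theorem h1_restriction_kernels (φ : groupCohomology.H1 M₁₆ ≃+ ZMod 16) :
    (∀ c ∈ resKer (Hsub : Set G₁₆), ∃ y : ZMod 16, φ c = 4 * y) ∧
    (φ '' interKerCyc = {x : ZMod 16 | ∃ y, x = 2 * y}) ∧
    ({x : groupCohomology.H1 M₁₆ | ∃ a ∈ resKer (Hsub : Set G₁₆),
        ∃ b ∈ resKer (Dsub : Set G₁₆), x = a + b} ⊂ interKerCyc) := by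
  refine ⟨fun c hc => ?_, ?_, ?_⟩
  · refine exists_eq_four_mul_of_four_nsmul_eq_zero _ ?_
    rw [← map_nsmul, four_nsmul_eq_zero_of_mem_resKer_Hsub hc, map_zero]
  · ext x
    constructor
    · rintro ⟨c, hc, rfl⟩
      refine exists_eq_two_mul_of_eight_nsmul_eq_zero _ ?_
      rw [← map_nsmul, eight_nsmul_eq_zero_of_mem_interKerCyc hc, map_zero]
    · rintro ⟨y, rfl⟩
      refine ⟨2 • φ.symm y, two_nsmul_mem_interKerCyc _, ?_⟩
      rw [map_nsmul, φ.apply_symm_apply, two_nsmul, two_mul]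
  · refine ⟨?_, fun hsub => ?_⟩
    · rintro _ ⟨a, ha, b, hb, rfl⟩
      exact mem_interKerCyc_of_four_nsmul_eq_zero φ (four_nsmul_add_eq_zero ha hb)
    obtain ⟨a, ha, b, hb, hab⟩ := hsub (two_nsmul_mem_interKerCyc (φ.symm 1))
    have h8 := congrArg φ (four_nsmul_add_eq_zero ha hb)
    rw [← hab, map_nsmul, map_nsmul, φ.apply_symm_apply, map_zero] at h8
    exact absurd h8 (by decide)
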